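/- There exists an auxiliary random variable U such that H(Y|X,U) = 0, H(X|Y,U) = 0, and I(X,Y;U) ≤ H(X|Y) + H(Y|X). -/

import Mathlib

open scoped BigOperators Pointwise Classical

noncomputable section

namespace GW

/-- A probability mass function on a finite type. -/
def IsPMF {α : Type} [Fintype α] (p : α → ℝ) : Prop :=
  (∀ a, 0 ≤ p a) ∧ ∑ a, p a = 1

/-- Distribution (pmf) of the random variable `f` under the pmf `p`. -/
def dist {α β : Type} [Fintype α] (p : α → ℝ) (f : α → β) : β → ℝ :=
  fun b => ∑ a, if f a = b then p a else 0

/-- Shannon entropy (base 2) of the random variable `f` under the pmf `p`. -/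
def H {α β : Type} [Fintype α] [Fintype β] (p : α → ℝ) (f : α → β) : ℝ :=
  ∑ b, -(dist p f b * Real.logb 2 (dist p f b))

/-- Mutual information `I(f; g)` under `p`. -/
def I2 {α β γ : Type} [Fintype α] [Fintype β] [Fintype γ]
    (p : α → ℝ) (f : α → β) (g : α → γ) : ℝ :=
  H p f + H p g - H p (fun a => (f a, g a))

/-- Conditional entropy `H(f | g)` under `p`. -/
def Hc {α β γ : Type} [Fintype α] [Fintype β] [Fintype γ]
    (p : α → ℝ) (f : α → β) (g : α → γ) : ℝ :=
  H p (fun a => (f a, g a)) - H p g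

/-- Conditional mutual information `I(f; g | h)` under `p`. -/
def Ic {α β γ δ : Type} [Fintype α] [Fintype β] [Fintype γ] [Fintype δ]
    (p : α → ℝ) (f : α → β) (g : α → γ) (h : α → δ) : ℝ :=
  Hc p f h + Hc p g h - Hc p (fun a => (f a, g a)) h

/-- Independence of the random variables `f` and `g` under `p`. -/
def Indep {α β γ : Type} [Fintype α] (p : α → ℝ) (f : α → β) (g : α → γ) : Prop :=
  ∀ b c, dist p (fun a => (f a, g a)) (b, c) = dist p f b * dist p g c

/-- `q` is a joint pmf on `X × Y × U` whose `(X,Y)`-marginal is `p`; i.e. `U` is an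
auxiliary random variable defined jointly with `(X,Y)` via a conditional pmf `p_{U|XY}`. -/
def IsAux {X Y U : Type} [Fintype X] [Fintype Y] [Fintype U]
    (p : X × Y → ℝ) (q : X × Y × U → ℝ) : Prop :=
  IsPMF q ∧ ∀ x y, (∑ u, q (x, y, u)) = p (x, y)

/-- Coordinate map onto `X`. -/
def cX {X Y U : Type} : X × Y × U → X := fun a => a.1
/-- Coordinate map onto `Y`. -/
def cY {X Y U : Type} : X × Y × U → Y := fun a => a.2.1
/-- Coordinate map onto `U`. -/
def cU {X Y U : Type} : X × Y × U → U := fun a => a.2.2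
/-- Coordinate map onto `X × Y`. -/
def cXY {X Y U : Type} : X × Y × U → X × Y := fun a => (a.1, a.2.1)

/-- The mutual information region `𝓘_{XY}`. -/
def MIRegion {X Y : Type} [Fintype X] [Fintype Y] (p : X × Y → ℝ) : Set (ℝ × ℝ × ℝ) :=
  { v | ∃ (U : Type) (_ : Fintype U) (q : X × Y × U → ℝ), IsAux p q ∧
      v = (I2 q cX cU, I2 q cY cU, I2 q cXY cU) }

/-- The outer region `𝓘ᵒ_{XY}`. -/
def OuterRegion {X Y : Type} [Fintype X] [Fintype Y] (p : X × Y → ℝ) : Set (ℝ × ℝ × ℝ) :=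
  { v | 0 ≤ v.1 ∧ 0 ≤ v.2.1 ∧ v.1 + v.2.1 - v.2.2 ≤ I2 p Prod.fst Prod.snd ∧
        0 ≤ v.2.2 - v.2.1 ∧ v.2.2 - v.2.1 ≤ Hc p Prod.fst Prod.snd ∧
        0 ≤ v.2.2 - v.1 ∧ v.2.2 - v.1 ≤ Hc p Prod.snd Prod.fst }

/-- Maximal interaction information `G_NNI(X; Y)`. -/
def GNNI {X Y : Type} [Fintype X] [Fintype Y] (p : X × Y → ℝ) : ℝ :=
  sSup { r | ∃ (U : Type) (_ : Fintype U) (q : X × Y × U → ℝ), IsAux p q ∧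
      r = Ic q cX cY cU - I2 p Prod.fst Prod.snd }

/-- Asymmetric private interaction information `G_PNI(X → Y)`. -/
def GPNI {X Y : Type} [Fintype X] [Fintype Y] (p : X × Y → ℝ) : ℝ :=
  sSup { r | ∃ (U : Type) (_ : Fintype U) (q : X × Y × U → ℝ), IsAux p q ∧
      Indep q cU cX ∧ r = Ic q cX cY cU - I2 p Prod.fst Prod.snd }

/-- Symmetric private interaction information `G_PPI(X; Y)`. -/
def GPPI {X Y : Type} [Fintype X] [Fintype Y] (p : X × Y → ℝ) : ℝ :=
  sSup { r | ∃ (U : Type) (_ : Fintype U) (q : X × Y × U → ℝ), IsAux p q ∧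
      Indep q cU cX ∧ Indep q cU cY ∧ r = Ic q cX cY cU - I2 p Prod.fst Prod.snd }

/-!
Take `U = (g, h)` with random functions `g : X → Y` and `h : Y → X`: given `(X, Y) = (x, y)`,
put `g x = y` and `h y = x`, and draw every other value `g x'` from `p(· | X = x')` and `h y'`
from `p(· | Y = y')`, all independently. Then `Y = g X` and `X = h Y`. Averaging over `(X, Y)`,
each `g x'` has law `p(· | X = x')` and each `h y'` has law `p(· | Y = y')`, so by subadditivity
`H(U) ≤ ∑ H(Y | X = x') + ∑ H(X | Y = y')`, while `H(U | X, Y)` is the same sum without the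
terms `x' = X` and `y' = Y`. So `I(X, Y; U) = H(U) - H(U | X, Y)` is at most the expected value
of the two removed terms, which is `H(Y | X) + H(X | Y)`.
-/

def negMulLog₂ (t : ℝ) : ℝ := -(t * Real.logb 2 t)

@[simp] lemma negMulLog₂_zero : negMulLog₂ 0 = 0 := by simp [negMulLog₂]

@[simp] lemma negMulLog₂_one : negMulLog₂ 1 = 0 := by simp [negMulLog₂]

lemma negMulLog₂_mul (s t : ℝ) : negMulLog₂ (s * t) = t * negMulLog₂ s + s * negMulLog₂ t := by
  rcases eq_or_ne s 0 with rfl | hs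
  · simp
  rcases eq_or_ne t 0 with rfl | ht
  · simp
  simp only [negMulLog₂, Real.logb_mul hs ht]
  ring

lemma negMulLog₂_prod {ι : Type} (s : Finset ι) (t : ι → ℝ) :
    negMulLog₂ (∏ i ∈ s, t i) = ∑ i ∈ s, (∏ j ∈ s.erase i, t j) * negMulLog₂ (t i) := by
  have hterm : ∀ i ∈ s, (∏ j ∈ s.erase i, t j) * negMulLog₂ (t i)
      = -((∏ j ∈ s, t j) * Real.logb 2 (t i)) := by
    intro i hi
    rw [← Finset.mul_prod_erase s t hi, negMulLog₂]
    ring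
  rw [Finset.sum_congr rfl hterm, Finset.sum_neg_distrib, ← Finset.mul_sum, negMulLog₂]
  rcases em (∃ i ∈ s, t i = 0) with ⟨i, hi, h0⟩ | h
  · simp [Finset.prod_eq_zero hi h0]
  · rw [Real.logb_prod s t fun i hi h0 => h ⟨i, hi, h0⟩]

lemma sub_div_log_two_le_mul_logb {P A B : ℝ} (hP : 0 ≤ P) (hPA : P ≤ A) (hPB : P ≤ B) :
    (P - A * B) / Real.log 2 ≤ P * Real.logb 2 P - P * Real.logb 2 A - P * Real.logb 2 B := by
  have hlog2 : 0 < Real.log 2 := Real.log_pos one_lt_two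
  rcases hP.eq_or_lt with rfl | hP
  · simp only [zero_sub, zero_mul, sub_zero]
    exact div_nonpos_of_nonpos_of_nonneg (neg_nonpos.2 (mul_nonneg hPA hPB)) hlog2.le
  have hA : 0 < A := hP.trans_le hPA
  have hB : 0 < B := hP.trans_le hPB
  have hlog : 1 - A * B / P ≤ Real.log P - Real.log A - Real.log B := by
    have h := Real.one_sub_inv_le_log_of_pos (show 0 < P / (A * B) by positivity)
    rwa [Real.log_div hP.ne' (by positivity), Real.log_mul hA.ne' hB.ne', inv_div,
      ← sub_sub] at h
  have key : P - A * B ≤ P * (Real.log P - Real.log A - Real.log B) := by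
    calc P - A * B = P * (1 - A * B / P) := by field_simp
      _ ≤ _ := mul_le_mul_of_nonneg_left hlog hP.le
  calc (P - A * B) / Real.log 2 ≤ P * (Real.log P - Real.log A - Real.log B) / Real.log 2 :=
        div_le_div_of_nonneg_right key hlog2.le
    _ = _ := by simp only [Real.logb]; ring

section Entropy

variable {α β γ : Type} [Fintype α]

lemma H_eq_sum [Fintype β] (p : α → ℝ) (f : α → β) : H p f = ∑ b, negMulLog₂ (dist p f b) := rfl

lemma dist_nonneg {p : α → ℝ} (hp : ∀ a, 0 ≤ p a) (f : α → β) (b : β) : 0 ≤ dist p f b :=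
  Finset.sum_nonneg fun a _ => by split_ifs <;> simp [hp a]

lemma sum_dist [Fintype β] (p : α → ℝ) (f : α → β) : ∑ b, dist p f b = ∑ a, p a := by
  simp only [dist]
  rw [Finset.sum_comm]
  simp

lemma sum_dist_pair_right [Fintype γ] (p : α → ℝ) (f : α → β) (g : α → γ) (b : β) :
    ∑ c, dist p (fun a => (f a, g a)) (b, c) = dist p f b := by
  simp only [dist]
  rw [Finset.sum_comm]
  simp [Prod.ext_iff, ite_and]

lemma sum_dist_pair_left [Fintype β] (p : α → ℝ) (f : α → β) (g : α → γ) (c : γ) :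
    ∑ b, dist p (fun a => (f a, g a)) (b, c) = dist p g c := by
  simp only [dist]
  rw [Finset.sum_comm]
  simp [Prod.ext_iff, ite_and]

lemma dist_fst_apply [Fintype β] (r : α × β → ℝ) (a : α) : dist r Prod.fst a = ∑ b, r (a, b) :=
  (sum_dist_pair_right r Prod.fst Prod.snd a).symm.trans (by simp [dist])

lemma H_id (p : α → ℝ) : H p (fun a => a) = ∑ a, negMulLog₂ (p a) := by
  simp [H_eq_sum, dist]

lemma H_comp_injective [Fintype β] [Fintype γ] (p : α → ℝ) (f : α → β) {e : β → γ}
    (he : e.Injective) : H p (fun a => e (f a)) = H p f := by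
  rw [H_eq_sum, H_eq_sum]
  refine (Fintype.sum_of_injective e he _ _ (fun c hc => ?_) (fun b => ?_)).symm
  · have : dist p (fun a => e (f a)) c = 0 :=
      Finset.sum_eq_zero fun a _ => if_neg fun h => hc ⟨f a, h⟩
    rw [this, negMulLog₂_zero]
  · simp [dist, he.eq_iff]

lemma H_comp_swap [Fintype β] [Fintype γ] (r : β × γ → ℝ) (f : γ × β → α) :
    H (r ∘ Prod.swap) f = H r (fun z => f z.swap) := by
  rw [H_eq_sum, H_eq_sum]
  congr! 2 with a
  exact Fintype.sum_equiv (Equiv.prodComm γ β) _ _ fun w => by simp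

lemma isPMF_comp_swap [Fintype β] [Fintype γ] {r : β × γ → ℝ} (hr : IsPMF r) :
    IsPMF (r ∘ Prod.swap) :=
  ⟨fun w => hr.1 w.swap,
    hr.2 ▸ Fintype.sum_equiv (Equiv.prodComm γ β) _ _ fun _ => rfl⟩

lemma Hc_comp_swap [Fintype β] [Fintype γ] (r : β × γ → ℝ) :
    Hc (r ∘ Prod.swap) Prod.snd Prod.fst = Hc r Prod.fst Prod.snd := by
  simp only [Hc, H_comp_swap]
  rfl

lemma H_of_subsingleton [Fintype β] [Subsingleton β] {p : α → ℝ} (hp : ∑ a, p a = 1)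
    (f : α → β) : H p f = 0 := by
  refine Finset.sum_eq_zero fun b _ => ?_
  have : dist p f b = 1 := by simpa [dist, Subsingleton.elim _ b] using hp
  rw [this]
  simp

lemma dist_pair_of_determined {p : α → ℝ} {f : α → β} {k : α → γ} {F : γ → β}
    (hd : ∀ a, p a ≠ 0 → f a = F (k a)) (b : β) (c : γ) :
    dist p (fun a => (f a, k a)) (b, c) = if b = F c then dist p k c else 0 := by
  unfold dist
  split_ifs with hb
  · refine Finset.sum_congr rfl fun a _ => ?_
    by_cases hpa : p a = 0
    · simp [hpa]
    · by_cases hk : k a = c <;> simp [Prod.ext_iff, hd a hpa, hb, hk]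
  · refine Finset.sum_eq_zero fun a _ => ?_
    by_cases hpa : p a = 0
    · simp [hpa]
    · refine if_neg fun h => hb ?_
      simp only [Prod.ext_iff] at h
      rw [← h.1, ← h.2, hd a hpa]

lemma Hc_eq_zero_of_determined [Fintype β] [Fintype γ] {p : α → ℝ} {f : α → β} {k : α → γ}
    (F : γ → β) (hd : ∀ a, p a ≠ 0 → f a = F (k a)) : Hc p f k = 0 := by
  rw [Hc, sub_eq_zero, H_eq_sum, H_eq_sum, Fintype.sum_prod_type_right]
  refine Finset.sum_congr rfl fun c _ => ?_
  simp [dist_pair_of_determined hd, apply_ite negMulLog₂]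

end Entropy

section Subadditivity

variable {α β γ κ : Type} [Fintype α] [Fintype β] [Fintype γ] [Fintype κ]

lemma H_pair_le {p : α → ℝ} (hp : IsPMF p) (f : α → β) (g : α → γ) :
    H p (fun a => (f a, g a)) ≤ H p f + H p g := by
  set P := dist p (fun a => (f a, g a))
  have hPf : ∀ b, ∑ c, P (b, c) = dist p f b := sum_dist_pair_right p f g
  have hPg : ∀ c, ∑ b, P (b, c) = dist p g c := sum_dist_pair_left p f g
  have hP0 : ∀ b c, 0 ≤ P (b, c) := fun b c => dist_nonneg hp.1 _ _
  have hHf : H p f = ∑ b, ∑ c, -(P (b, c) * Real.logb 2 (dist p f b)) :=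
    Finset.sum_congr rfl fun b _ => by rw [Finset.sum_neg_distrib, ← Finset.sum_mul, hPf]
  have hHg : H p g = ∑ b, ∑ c, -(P (b, c) * Real.logb 2 (dist p g c)) := by
    rw [Finset.sum_comm]
    exact Finset.sum_congr rfl fun c _ => by rw [Finset.sum_neg_distrib, ← Finset.sum_mul, hPg]
  have hHfg : H p (fun a => (f a, g a)) = ∑ b, ∑ c, -(P (b, c) * Real.logb 2 (P (b, c))) :=
    Fintype.sum_prod_type _
  have hmass : ∑ b, ∑ c, (P (b, c) - dist p f b * dist p g c) = 0 := by
    simp only [Finset.sum_sub_distrib, ← Finset.mul_sum, ← Finset.sum_mul, hPf, sum_dist, hp.2]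
    norm_num
  have hgibbs : ∑ b, ∑ c, (P (b, c) - dist p f b * dist p g c) / Real.log 2
      ≤ H p f + H p g - H p (fun a => (f a, g a)) := by
    rw [hHf, hHg, hHfg, ← Finset.sum_add_distrib, ← Finset.sum_sub_distrib]
    refine Finset.sum_le_sum fun b _ => ?_
    rw [← Finset.sum_add_distrib, ← Finset.sum_sub_distrib]
    refine Finset.sum_le_sum fun c _ => ?_
    have hPA : P (b, c) ≤ dist p f b :=
      hPf b ▸ Finset.single_le_sum (fun c' _ => hP0 b c') (Finset.mem_univ c)
    have hPB : P (b, c) ≤ dist p g c :=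
      hPg c ▸ Finset.single_le_sum (fun b' _ => hP0 b' c) (Finset.mem_univ b)
    exact (sub_div_log_two_le_mul_logb (hP0 b c) hPA hPB).trans_eq (by ring)
  simp only [← Finset.sum_div, hmass, zero_div] at hgibbs
  linarith

lemma H_pi_fin_le {p : α → ℝ} (hp : IsPMF p) :
    ∀ {n : ℕ} (F : α → Fin n → κ), H p F ≤ ∑ i, H p (fun a => F a i)
  | 0, F => by simp [H_of_subsingleton hp.2]
  | n + 1, F => by
    calc H p F = H p (fun a => (F a 0, Fin.tail (F a))) := by
          rw [← H_comp_injective p _ (Fin.consEquiv fun _ => κ).injective]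
          simp [Fin.consEquiv]
      _ ≤ H p (fun a => F a 0) + H p (fun a => Fin.tail (F a)) := H_pair_le hp _ _
      _ ≤ H p (fun a => F a 0) + ∑ i, H p (fun a => Fin.tail (F a) i) := by
          gcongr
          exact H_pi_fin_le hp _
      _ = ∑ i, H p (fun a => F a i) := by rw [Fin.sum_univ_succ]; rfl

lemma H_pi_le {ι : Type} [Fintype ι] {p : α → ℝ} (hp : IsPMF p) (F : α → ι → κ) :
    H p F ≤ ∑ i, H p (fun a => F a i) := by
  let e := Fintype.equivFin ι
  rw [← H_comp_injective p F (e.arrowCongr (Equiv.refl κ)).injective,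
    ← e.symm.sum_comp]
  exact H_pi_fin_le hp _

end Subadditivity

lemma sum_negMulLog₂_mul_kernel {α β : Type} [Fintype α] [Fintype β] (A : α → ℝ)
    (K : α → β → ℝ) (hK : ∀ a, ∑ b, K a b = 1) :
    ∑ a, ∑ b, negMulLog₂ (A a * K a b)
      = ∑ a, negMulLog₂ (A a) + ∑ a, A a * ∑ b, negMulLog₂ (K a b) := by
  simp only [negMulLog₂_mul, Finset.sum_add_distrib, ← Finset.sum_mul, ← Finset.mul_sum, hK,
    one_mul]

section PiDist

variable {ι κ : Type} [Fintype ι]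

def piDist (W : ι → κ → ℝ) (g : ι → κ) : ℝ := ∏ i, W i (g i)

lemma piDist_nonneg {W : ι → κ → ℝ} (hW : ∀ i k, 0 ≤ W i k) (g : ι → κ) : 0 ≤ piDist W g :=
  Finset.prod_nonneg fun i _ => hW i (g i)

lemma apply_eq_of_piDist_ne_zero {W : ι → κ → ℝ} {g : ι → κ} (h : piDist W g ≠ 0) (i : ι) :
    W i (g i) ≠ 0 :=
  Finset.prod_ne_zero_iff.mp h i (Finset.mem_univ i)

lemma sum_piDist [Fintype κ] {W : ι → κ → ℝ} (hW : ∀ i, ∑ k, W i k = 1) :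
    ∑ g, piDist W g = 1 := by
  simp [piDist, ← Fintype.prod_sum, hW]

lemma piDist_update (W : ι → κ → ℝ) (i : ι) (w : κ → ℝ) (g : ι → κ) :
    piDist (Function.update W i w) g = w (g i) * ∏ j ∈ Finset.univ.erase i, W j (g j) := by
  rw [piDist, ← Finset.mul_prod_erase _ _ (Finset.mem_univ i), Function.update_self]
  congr 1
  exact Finset.prod_congr rfl fun j hj => by rw [Function.update_of_ne (Finset.ne_of_mem_erase hj)]

lemma sum_piDist_update [Fintype κ] {W : ι → κ → ℝ} (hW : ∀ i, ∑ k, W i k = 1) (i : ι)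
    (w : κ → ℝ) :
    ∑ g, piDist (Function.update W i w) g = ∑ k, w k := by
  simp only [piDist]
  rw [← Fintype.prod_sum, ← Finset.mul_prod_erase _ _ (Finset.mem_univ i), Function.update_self,
    Finset.prod_eq_one fun j hj => by rw [Function.update_of_ne (Finset.ne_of_mem_erase hj), hW],
    mul_one]

lemma dist_piDist_eval [Fintype κ] {W : ι → κ → ℝ} (hW : ∀ i, ∑ k, W i k = 1) (i : ι) (k : κ) :
    dist (piDist W) (fun g => g i) k = W i k := by
  have h : ∀ g, (if g i = k then piDist W g else 0)
      = piDist (Function.update W i fun l => if l = k then W i l else 0) g := by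
    intro g
    rw [piDist_update, piDist, ← Finset.mul_prod_erase _ _ (Finset.mem_univ i)]
    split_ifs <;> simp
  simp [dist, h, sum_piDist_update hW]

lemma sum_negMulLog₂_piDist [Fintype κ] {W : ι → κ → ℝ} (hW : ∀ i, ∑ k, W i k = 1) :
    ∑ g, negMulLog₂ (piDist W g) = ∑ i, ∑ k, negMulLog₂ (W i k) := by
  have h : ∀ g, negMulLog₂ (piDist W g)
      = ∑ i, piDist (Function.update W i fun k => negMulLog₂ (W i k)) g := by
    intro g
    rw [piDist, negMulLog₂_prod]
    exact Finset.sum_congr rfl fun i _ => by rw [piDist_update, mul_comm]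
  simp only [h]
  rw [Finset.sum_comm]
  simp [sum_piDist_update hW]

end PiDist

section Conditional

variable {α β : Type} [Fintype α] [Fintype β]

/-- Off the support of the `α`-marginal any pmf would do; the `β`-marginal is used so that no
point of `β` has to be chosen. -/
def condDist (r : α × β → ℝ) (a : α) (b : β) : ℝ :=
  if dist r Prod.fst a = 0 then dist r Prod.snd b else r (a, b) / dist r Prod.fst a

def condEntropyAt (r : α × β → ℝ) (a : α) : ℝ := ∑ b, negMulLog₂ (condDist r a b)

lemma condDist_nonneg {r : α × β → ℝ} (hr : ∀ z, 0 ≤ r z) (a : α) (b : β) :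
    0 ≤ condDist r a b := by
  unfold condDist
  split_ifs
  · exact dist_nonneg hr _ _
  · exact div_nonneg (hr _) (dist_nonneg hr _ _)

lemma sum_condDist {r : α × β → ℝ} (hr : IsPMF r) (a : α) : ∑ b, condDist r a b = 1 := by
  unfold condDist
  split_ifs with h
  · rw [sum_dist, hr.2]
  · rw [← Finset.sum_div, ← dist_fst_apply, div_self h]

lemma dist_fst_mul_condDist {r : α × β → ℝ} (hr : ∀ z, 0 ≤ r z) (a : α) (b : β) :
    dist r Prod.fst a * condDist r a b = r (a, b) := by
  unfold condDist
  split_ifs with h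
  · have hrow := h
    rw [dist_fst_apply, Finset.sum_eq_zero_iff_of_nonneg fun b _ => hr (a, b)] at hrow
    rw [h, zero_mul, hrow b (Finset.mem_univ b)]
  · exact mul_div_cancel₀ _ h

lemma sum_mul_condEntropyAt {r : α × β → ℝ} (hr : IsPMF r) :
    ∑ z, r z * condEntropyAt r z.1 = Hc r Prod.snd Prod.fst := by
  have hrow : ∀ a, dist r Prod.fst a * condEntropyAt r a
      = ∑ b, negMulLog₂ (r (a, b)) - negMulLog₂ (dist r Prod.fst a) := by
    intro a
    simp only [condEntropyAt, Finset.mul_sum, ← dist_fst_mul_condDist hr.1 a, negMulLog₂_mul,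
      Finset.sum_add_distrib, ← Finset.sum_mul, sum_condDist hr, one_mul, add_sub_cancel_left]
  have hswap : H r (fun z => (z.2, z.1)) = H r (fun z => z) :=
    H_comp_injective r (fun z => z) Prod.swap_injective
  rw [Hc, hswap, H_id, H_eq_sum,
    Fintype.sum_prod_type, Fintype.sum_prod_type, ← Finset.sum_sub_distrib]
  refine Finset.sum_congr rfl fun a _ => ?_
  rw [← hrow, dist_fst_apply, Finset.sum_mul]

def pinnedRows (r : α × β → ℝ) (z : α × β) : α → β → ℝ :=
  Function.update (condDist r) z.1 (Pi.single z.2 1)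

lemma pinnedRows_nonneg {r : α × β → ℝ} (hr : ∀ z, 0 ≤ r z) (z : α × β) (a : α) (b : β) :
    0 ≤ pinnedRows r z a b := by
  unfold pinnedRows
  rcases eq_or_ne a z.1 with rfl | h
  · rw [Function.update_self, Pi.single_apply]
    split_ifs <;> norm_num
  · rw [Function.update_of_ne h]
    exact condDist_nonneg hr a b

lemma sum_pinnedRows {r : α × β → ℝ} (hr : IsPMF r) (z : α × β) (a : α) :
    ∑ b, pinnedRows r z a b = 1 := by
  unfold pinnedRows
  rcases eq_or_ne a z.1 with rfl | h
  · simp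
  · rw [Function.update_of_ne h, sum_condDist hr]

lemma sum_mul_pinnedRows {r : α × β → ℝ} (hr : IsPMF r) (a : α) (b : β) :
    ∑ z, r z * pinnedRows r z a b = condDist r a b := by
  have hrow : ∀ a', ∑ b', r (a', b') * pinnedRows r (a', b') a b
      = dist r Prod.fst a' * condDist r a b := by
    intro a'
    rcases eq_or_ne a a' with rfl | h
    · simp [pinnedRows, Pi.single_apply, dist_fst_mul_condDist hr.1]
    · simp [pinnedRows, Function.update_of_ne h, ← Finset.sum_mul, dist_fst_apply]
  rw [Fintype.sum_prod_type]
  simp only [hrow, ← Finset.sum_mul, sum_dist, hr.2, one_mul]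

lemma sum_sum_negMulLog₂_pinnedRows (r : α × β → ℝ) (z : α × β) :
    ∑ a, ∑ b, negMulLog₂ (pinnedRows r z a b)
      = ∑ a, condEntropyAt r a - condEntropyAt r z.1 := by
  have hrow : ∀ a, ∑ b, negMulLog₂ (pinnedRows r z a b)
      = Function.update (condEntropyAt r) z.1 0 a := by
    intro a
    rcases eq_or_ne a z.1 with rfl | h
    · simp [pinnedRows, Pi.single_apply, apply_ite negMulLog₂]
    · simp [pinnedRows, h, condEntropyAt]
  simp only [hrow, Finset.sum_update_of_mem (Finset.mem_univ _), zero_add,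
    Finset.sum_eq_add_sum_sdiff_singleton_of_mem (Finset.mem_univ z.1) (condEntropyAt r)]
  ring

lemma eq_of_piDist_pinnedRows_ne_zero {r : α × β → ℝ} {z : α × β}
    {g : α → β} (h : piDist (pinnedRows r z) g ≠ 0) : g z.1 = z.2 := by
  simpa [pinnedRows, Pi.single_apply] using apply_eq_of_piDist_ne_zero h z.1

end Conditional

lemma dist_mul_comp_fst {β γ V : Type} [Fintype β] [Fintype γ] (A : β → ℝ) (B : γ → ℝ)
    (φ : β → V) (v : V) : dist (fun u : β × γ => A u.1 * B u.2) (fun u => φ u.1) v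
      = dist A φ v * ∑ c, B c := by
  simp only [dist, Fintype.sum_prod_type, Finset.sum_mul_sum, ite_mul, zero_mul]

lemma dist_mul_comp_snd {β γ V : Type} [Fintype β] [Fintype γ] (A : β → ℝ) (B : γ → ℝ)
    (φ : γ → V) (v : V) : dist (fun u : β × γ => A u.1 * B u.2) (fun u => φ u.2) v
      = (∑ b, A b) * dist B φ v := by
  simp only [dist, Fintype.sum_prod_type, Finset.sum_mul_sum, mul_ite, mul_zero]

section CompProd

variable {X Y U : Type} [Fintype X] [Fintype Y] [Fintype U]

def compProd (p : X × Y → ℝ) (K : X × Y → U → ℝ) : X × Y × U → ℝ :=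
  fun w => p (w.1, w.2.1) * K (w.1, w.2.1) w.2.2

variable {p : X × Y → ℝ} {K : X × Y → U → ℝ}

lemma isAux_compProd (hp : IsPMF p) (hK0 : ∀ z u, 0 ≤ K z u) (hK1 : ∀ z, ∑ u, K z u = 1) :
    IsAux p (compProd p K) := by
  have hmarg : ∀ x y, ∑ u, compProd p K (x, y, u) = p (x, y) := fun x y => by
    simp [compProd, ← Finset.mul_sum, hK1]
  refine ⟨⟨fun w => mul_nonneg (hp.1 _) (hK0 _ _), ?_⟩, hmarg⟩
  simpa [Fintype.sum_prod_type, hmarg] using hp.2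

lemma dist_cXY_of_isAux {q : X × Y × U → ℝ} (hq : IsAux p q) (z : X × Y) :
    dist q cXY z = p z := by
  obtain ⟨x, y⟩ := z
  rw [← hq.2 x y]
  simp only [dist, cXY, Prod.ext_iff, ite_and, Fintype.sum_prod_type, Finset.sum_ite_irrel,
    Finset.sum_const_zero, Finset.sum_ite_eq', Finset.mem_univ, ↓reduceIte]
  rw [Finset.sum_comm]
  simp

lemma dist_compProd_comp_cU {V : Type} (φ : U → V) (v : V) :
    dist (compProd p K) (fun w => φ (cU w)) v = ∑ z, p z * dist (K z) φ v := by
  simp only [dist, compProd, cU, Fintype.sum_prod_type, Finset.mul_sum, mul_ite, mul_zero]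
  rfl

lemma I2_compProd (hp : IsPMF p) (hK0 : ∀ z u, 0 ≤ K z u) (hK1 : ∀ z, ∑ u, K z u = 1) :
    I2 (compProd p K) cXY cU
      = H (compProd p K) cU - ∑ z, p z * ∑ u, negMulLog₂ (K z u) := by
  have hXY : H (compProd p K) cXY = ∑ z, negMulLog₂ (p z) := by
    simp only [H_eq_sum, dist_cXY_of_isAux (isAux_compProd hp hK0 hK1)]
  have hXYU : H (compProd p K) (fun w => (cXY w, cU w))
      = ∑ z, negMulLog₂ (p z) + ∑ z, p z * ∑ u, negMulLog₂ (K z u) := by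
    calc H (compProd p K) (fun w => (cXY w, cU w)) = H (compProd p K) (fun w => w) :=
          H_comp_injective _ (fun w => w) (Equiv.prodAssoc X Y U).symm.injective
      _ = ∑ z, ∑ u, negMulLog₂ (p z * K z u) := by
          rw [H_id]
          simp only [Fintype.sum_prod_type]
          rfl
      _ = _ := sum_negMulLog₂_mul_kernel p K hK1
  rw [I2, hXY, hXYU]
  ring

end CompProd

section FunctionalKernel

variable {X Y : Type} [Fintype X] [Fintype Y] {p : X × Y → ℝ}

def functionalKernel (p : X × Y → ℝ) (z : X × Y) : (X → Y) × (Y → X) → ℝ := fun u =>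
  piDist (pinnedRows p z) u.1 * piDist (pinnedRows (p ∘ Prod.swap) z.swap) u.2

lemma functionalKernel_nonneg (hp : ∀ z, 0 ≤ p z) (z : X × Y) (u : (X → Y) × (Y → X)) :
    0 ≤ functionalKernel p z u :=
  mul_nonneg (piDist_nonneg (pinnedRows_nonneg hp z) _)
    (piDist_nonneg (pinnedRows_nonneg (fun w => hp w.swap) z.swap) _)

lemma sum_functionalKernel (hp : IsPMF p) (z : X × Y) : ∑ u, functionalKernel p z u = 1 := by
  simp only [functionalKernel, Fintype.sum_prod_type, ← Finset.mul_sum,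
    sum_piDist (sum_pinnedRows hp z), sum_piDist (sum_pinnedRows (isPMF_comp_swap hp) z.swap),
    mul_one]

lemma functionalKernel_ne_zero {z : X × Y} {u : (X → Y) × (Y → X)}
    (h : functionalKernel p z u ≠ 0) : u.1 z.1 = z.2 ∧ u.2 z.2 = z.1 :=
  ⟨eq_of_piDist_pinnedRows_ne_zero (left_ne_zero_of_mul h),
    eq_of_piDist_pinnedRows_ne_zero (right_ne_zero_of_mul h)⟩

lemma sum_negMulLog₂_functionalKernel (hp : IsPMF p) (z : X × Y) :
    ∑ u, negMulLog₂ (functionalKernel p z u)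
      = (∑ x, condEntropyAt p x - condEntropyAt p z.1)
        + (∑ y, condEntropyAt (p ∘ Prod.swap) y - condEntropyAt (p ∘ Prod.swap) z.2) := by
  simp only [functionalKernel, Fintype.sum_prod_type]
  rw [sum_negMulLog₂_mul_kernel _ (fun _ => piDist (pinnedRows (p ∘ Prod.swap) z.swap))
      fun _ => sum_piDist (sum_pinnedRows (isPMF_comp_swap hp) z.swap),
    ← Finset.sum_mul, sum_piDist (sum_pinnedRows hp z), one_mul,
    sum_negMulLog₂_piDist (sum_pinnedRows hp z),
    sum_negMulLog₂_piDist (sum_pinnedRows (isPMF_comp_swap hp) z.swap),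
    sum_sum_negMulLog₂_pinnedRows, sum_sum_negMulLog₂_pinnedRows]
  rfl

lemma H_compProd_functionalKernel_fst (hp : IsPMF p) (x : X) :
    H (compProd p (functionalKernel p)) (fun w => (cU w).1 x) = condEntropyAt p x := by
  refine Finset.sum_congr rfl fun c _ => congrArg negMulLog₂ ?_
  calc dist (compProd p (functionalKernel p)) (fun w => (cU w).1 x) c
      = ∑ z, p z * dist (functionalKernel p z) (fun u => u.1 x) c :=
        dist_compProd_comp_cU (fun u : (X → Y) × (Y → X) => u.1 x) c
    _ = ∑ z, p z * pinnedRows p z x c := by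
      refine Finset.sum_congr rfl fun z _ => congrArg _ ?_
      refine (dist_mul_comp_fst _ _ (fun g : X → Y => g x) c).trans ?_
      rw [dist_piDist_eval (sum_pinnedRows hp z),
        sum_piDist (sum_pinnedRows (isPMF_comp_swap hp) z.swap), mul_one]
    _ = condDist p x c := sum_mul_pinnedRows hp x c

lemma H_compProd_functionalKernel_snd (hp : IsPMF p) (y : Y) :
    H (compProd p (functionalKernel p)) (fun w => (cU w).2 y)
      = condEntropyAt (p ∘ Prod.swap) y := by
  refine Finset.sum_congr rfl fun c _ => congrArg negMulLog₂ ?_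
  calc dist (compProd p (functionalKernel p)) (fun w => (cU w).2 y) c
      = ∑ z, p z * dist (functionalKernel p z) (fun u => u.2 y) c :=
        dist_compProd_comp_cU (fun u : (X → Y) × (Y → X) => u.2 y) c
    _ = ∑ z, p z * pinnedRows (p ∘ Prod.swap) z.swap y c := by
      refine Finset.sum_congr rfl fun z _ => congrArg _ ?_
      refine (dist_mul_comp_snd _ _ (fun h : Y → X => h y) c).trans ?_
      rw [sum_piDist (sum_pinnedRows hp z), one_mul,
        dist_piDist_eval (sum_pinnedRows (isPMF_comp_swap hp) z.swap)]
    _ = ∑ w, (p ∘ Prod.swap) w * pinnedRows (p ∘ Prod.swap) w y c :=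
      Fintype.sum_equiv (Equiv.prodComm X Y) _ _ fun _ => rfl
    _ = condDist (p ∘ Prod.swap) y c := sum_mul_pinnedRows (isPMF_comp_swap hp) y c

lemma I2_compProd_functionalKernel_le (hp : IsPMF p) :
    I2 (compProd p (functionalKernel p)) cXY cU
      ≤ Hc p Prod.fst Prod.snd + Hc p Prod.snd Prod.fst := by
  have hK1 := sum_functionalKernel hp
  have hq := (isAux_compProd hp (functionalKernel_nonneg hp.1) hK1).1
  have hU : H (compProd p (functionalKernel p)) cU
      ≤ ∑ x, condEntropyAt p x + ∑ y, condEntropyAt (p ∘ Prod.swap) y := by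
    calc H (compProd p (functionalKernel p)) cU
        ≤ H (compProd p (functionalKernel p)) (fun w => (cU w).1)
          + H (compProd p (functionalKernel p)) (fun w => (cU w).2) := H_pair_le hq _ _
      _ ≤ ∑ x, H (compProd p (functionalKernel p)) (fun w => (cU w).1 x)
          + ∑ y, H (compProd p (functionalKernel p)) (fun w => (cU w).2 y) :=
        add_le_add (H_pi_le hq _) (H_pi_le hq _)
      _ = _ := by
        simp only [H_compProd_functionalKernel_fst hp, H_compProd_functionalKernel_snd hp]
  have hYX : ∑ z, p z * condEntropyAt (p ∘ Prod.swap) z.2 = Hc p Prod.fst Prod.snd := by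
    rw [← Hc_comp_swap, ← sum_mul_condEntropyAt (isPMF_comp_swap hp)]
    exact Fintype.sum_equiv (Equiv.prodComm X Y) _ _ fun _ => rfl
  have hcond : ∑ z, p z * ∑ u, negMulLog₂ (functionalKernel p z u)
      = ∑ x, condEntropyAt p x + ∑ y, condEntropyAt (p ∘ Prod.swap) y
        - Hc p Prod.snd Prod.fst - Hc p Prod.fst Prod.snd := by
    simp only [sum_negMulLog₂_functionalKernel hp, mul_add, mul_sub, Finset.sum_add_distrib,
      Finset.sum_sub_distrib, ← Finset.sum_mul, hp.2, one_mul, sum_mul_condEntropyAt hp, hYX]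
    ring
  rw [I2_compProd hp (functionalKernel_nonneg hp.1) hK1]
  linarith

end FunctionalKernel

/-- there is an auxiliary random variable `U` with `H(Y|X,U) = 0`,
`H(X|Y,U) = 0` and `I(X,Y;U) ≤ H(X|Y) + H(Y|X)`. -/
theorem stmt4 {X Y : Type} [Fintype X] [Fintype Y] (p : X × Y → ℝ) (hp : IsPMF p) :
    ∃ (U : Type) (_ : Fintype U) (q : X × Y × U → ℝ), IsAux p q ∧
      Hc q cY (fun a => (cX a, cU a)) = 0 ∧
      Hc q cX (fun a => (cY a, cU a)) = 0 ∧
      I2 q cXY cU ≤ Hc p Prod.fst Prod.snd + Hc p Prod.snd Prod.fst := by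
  refine ⟨_, inferInstance, compProd p (functionalKernel p),
    isAux_compProd hp (functionalKernel_nonneg hp.1) (sum_functionalKernel hp), ?_, ?_,
    I2_compProd_functionalKernel_le hp⟩
  · exact Hc_eq_zero_of_determined (fun w => w.2.1 w.1) fun w hw =>
      ((functionalKernel_ne_zero (right_ne_zero_of_mul hw)).1).symm
  · exact Hc_eq_zero_of_determined (fun w => w.2.2 w.1) fun w hw =>
      ((functionalKernel_ne_zero (right_ne_zero_of_mul hw)).2).symm

end GW
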